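/- arXiv:2004.02712 — 2 statements merged into one kernel-verified Lean document; each statement's English description precedes it below -/
import Mathlib

section
/- (Radial-type lemma.) For every v ∈ X_1 and every 0 < r ≤ 1, |v(r)| ≤ [c̄ (r^{−(N−2k)/k} − 1)]^{k/(k+1)} ‖v‖_{X_1}, where c̄ = (k/(N−2k)) ω_{N,k}^{−1/k}. -/
open MeasureTheory Real Set Filter Asymptotics

/-- `k* = N(k+1)/(N-2k)`, the critical exponent for the `k`-Hessian operator. -/
noncomputable def kstar (N k : ℕ) : ℝ :=
  ((N : ℝ) * ((k : ℝ) + 1)) / ((N : ℝ) - 2 * (k : ℝ))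

/-- `ω_{N-1} = 2 π^{N/2} / Γ(N/2)`, the surface area of the unit sphere in `ℝ^N`. -/
noncomputable def omegaSphere (N : ℕ) : ℝ :=
  2 * Real.pi ^ ((N : ℝ) / 2) / Real.Gamma ((N : ℝ) / 2)

/-- `ω_{N,k} = ω_{N-1} * C(N,k) / N`. -/
noncomputable def omegaNk (N k : ℕ) : ℝ :=
  omegaSphere N * (N.choose k : ℝ) / (N : ℝ)

/-- Membership in the weighted Sobolev space `X_1`: `v` is locally absolutely
continuous on `(0,1)` (expressed via the fundamental theorem of calculus for its
a.e. derivative `deriv v`), tends to `0` at `1⁻` (with value `0` at `1`), and the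
weighted integrals of `|v'|^{k+1}` and `|v|^{k+1}` are finite. -/
structure MemX1 (N k : ℕ) (v : ℝ → ℝ) : Prop where
  ftc : ∀ a ∈ Set.Ioo (0:ℝ) 1, ∀ b ∈ Set.Ioo (0:ℝ) 1,
    IntervalIntegrable (deriv v) MeasureTheory.volume a b ∧
      v b - v a = ∫ s in a..b, deriv v s
  lim_one : Filter.Tendsto v (nhdsWithin 1 (Set.Iio 1)) (nhds 0)
  val_one : v 1 = 0
  int_deriv : MeasureTheory.IntegrableOn
    (fun r : ℝ => r ^ ((N : ℝ) - (k : ℝ)) * |deriv v r| ^ ((k : ℝ) + 1)) (Set.Ioo 0 1)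
  int_self : MeasureTheory.IntegrableOn
    (fun r : ℝ => r ^ ((N : ℝ) - 1) * |v r| ^ ((k : ℝ) + 1)) (Set.Ioo 0 1)

/-- The norm of `X_1`: `‖v‖ = (ω_{N,k} ∫_0^1 r^{N-k} |v'|^{k+1} dr)^{1/(k+1)}`. -/
noncomputable def X1norm (N k : ℕ) (v : ℝ → ℝ) : ℝ :=
  (omegaNk N k * ∫ r in Set.Ioo (0:ℝ) 1,
      r ^ ((N : ℝ) - (k : ℝ)) * |deriv v r| ^ ((k : ℝ) + 1)) ^ (1 / ((k : ℝ) + 1))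

/-- The supercritical functional `∫_0^1 r^{N-1} |v|^{k* + r^α} dr`. -/
noncomputable def superInt (N k : ℕ) (α : ℝ) (v : ℝ → ℝ) : ℝ :=
  ∫ r in Set.Ioo (0:ℝ) 1, r ^ ((N : ℝ) - 1) * |v r| ^ (kstar N k + r ^ α)

/-- `V_{k,N,α}`, the supremum of the supercritical functional on the unit sphere of `X_1`. -/
noncomputable def Vsup (N k : ℕ) (α : ℝ) : ℝ :=
  sSup ((fun v => superInt N k α v) '' {v : ℝ → ℝ | MemX1 N k v ∧ X1norm N k v = 1})

/-- The critical functional `∫_0^1 r^{N-1} |v|^{k*} dr`. -/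
noncomputable def critInt (N k : ℕ) (v : ℝ → ℝ) : ℝ :=
  ∫ r in Set.Ioo (0:ℝ) 1, r ^ ((N : ℝ) - 1) * |v r| ^ (kstar N k)

/-- `V_{k,N}`, the supremum of the critical functional on the unit sphere of `X_1`. -/
noncomputable def VkN (N k : ℕ) : ℝ :=
  sSup ((fun v => critInt N k v) '' {v : ℝ → ℝ | MemX1 N k v ∧ X1norm N k v = 1})

/-- The normalizing constant `ĉ = (N ((N-2k)/k)^k)^{(N-2k)/(2k)}`. -/
noncomputable def chat (N k : ℕ) : ℝ :=
  ((N : ℝ) * (((N : ℝ) - 2 * (k : ℝ)) / (k : ℝ)) ^ k) ^ (((N : ℝ) - 2 * (k : ℝ)) / (2 * (k : ℝ)))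

/-- The instanton `v*_ε(r) = ĉ (ε^{2/(k+1)} / (ε² + r²))^{(N-2k)/(2k)}`. -/
noncomputable def vstar (N k : ℕ) (ε r : ℝ) : ℝ :=
  chat N k * (ε ^ ((2 : ℝ) / ((k : ℝ) + 1)) / (ε ^ 2 + r ^ 2)) ^
    (((N : ℝ) - 2 * (k : ℝ)) / (2 * (k : ℝ)))

/-- `K = ∫_0^∞ r^{N-1} (v*_1(r))^{k*} dr = S^{N/(2k)}`. -/
noncomputable def Kconst (N k : ℕ) : ℝ :=
  ∫ r in Set.Ioi (0:ℝ), r ^ ((N : ℝ) - 1) * vstar N k 1 r ^ kstar N k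

/-!
Since `v(1⁻) = 0`, `|v(r)| ≤ ∫_r^1 |v'|`. Writing
`|v'| = (s^{(N-k)/(k+1)} |v'|) · s^{-(N-k)/(k+1)}`, Hölder's inequality with exponents `k+1`
and `(k+1)/k` bounds this by
`(∫_r^1 s^{N-k} |v'|^{k+1})^{1/(k+1)} (∫_r^1 s^{-(N-k)/k})^{k/(k+1)}`.
The second integral equals `(k/(N-2k)) (r^{-(N-2k)/k} - 1)` because `N > 2k`, and the first is
at most `ω_{N,k}^{-1} ‖v‖_{X_1}^{k+1}`.
-/

open Topology

section WeightedHolder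

variable {α : Type*} [MeasurableSpace α] {μ : Measure α}

theorem memLp_ofReal_of_integrable_rpow {g : α → ℝ} {p : ℝ} (hp : 0 < p)
    (hg : AEStronglyMeasurable g μ) (hg0 : 0 ≤ᵐ[μ] g)
    (hint : Integrable (fun x => g x ^ p) μ) :
    MemLp g (ENNReal.ofReal p) μ := by
  rw [← integrable_norm_rpow_iff hg (by simpa using hp) ENNReal.ofReal_ne_top,
    ENNReal.toReal_ofReal hp.le]
  refine hint.congr ?_
  filter_upwards [hg0] with x hx
  rw [Real.norm_of_nonneg hx]

variable {p q : ℝ} {f w : α → ℝ}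

/-- Hölder's inequality for `|f| = (w^{1/p} |f|) * w^{-1/p}`. -/
theorem integrable_and_integral_abs_le_weighted (hpq : p.HolderConjugate q)
    (hf : AEStronglyMeasurable f μ) (hw : AEMeasurable w μ) (hw_pos : ∀ᵐ x ∂μ, 0 < w x)
    (hfw : Integrable (fun x => w x * |f x| ^ p) μ)
    (hwq : Integrable (fun x => w x ^ (1 - q)) μ) :
    Integrable f μ ∧ ∫ x, |f x| ∂μ ≤
      (∫ x, w x * |f x| ^ p ∂μ) ^ (1 / p) * (∫ x, w x ^ (1 - q) ∂μ) ^ (1 / q) := by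
  have hp := hpq.pos
  set F : α → ℝ := fun x => w x ^ (1 / p) * |f x|
  set G : α → ℝ := fun x => w x ^ (-(1 / p))
  have hF0 : 0 ≤ᵐ[μ] F := by
    filter_upwards [hw_pos] with x hx
    positivity
  have hG0 : 0 ≤ᵐ[μ] G := by
    filter_upwards [hw_pos] with x hx
    positivity
  have hFG : (fun x => F x * G x) =ᵐ[μ] fun x => |f x| := by
    filter_upwards [hw_pos] with x hx
    rw [mul_right_comm, ← rpow_add hx, add_neg_cancel, rpow_zero, one_mul]
  have hFp : (fun x => F x ^ p) =ᵐ[μ] fun x => w x * |f x| ^ p := by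
    filter_upwards [hw_pos] with x hx
    rw [mul_rpow (by positivity) (abs_nonneg _), ← rpow_mul hx.le, one_div_mul_cancel hp.ne',
      rpow_one]
  have hGq : (fun x => G x ^ q) =ᵐ[μ] fun x => w x ^ (1 - q) := by
    filter_upwards [hw_pos] with x hx
    rw [← rpow_mul hx.le]
    congr 1
    field_simp
    linarith [hpq.mul_eq_add]
  have hFm : MemLp F (ENNReal.ofReal p) μ :=
    memLp_ofReal_of_integrable_rpow hp
      ((hw.pow_const _).mul hf.aemeasurable.abs).aestronglyMeasurable hF0
      (hfw.congr hFp.symm)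
  have hGm : MemLp G (ENNReal.ofReal q) μ :=
    memLp_ofReal_of_integrable_rpow hpq.symm.pos (hw.pow_const _).aestronglyMeasurable hG0
      (hwq.congr hGq.symm)
  have hint : Integrable (fun x => F x * G x) μ :=
    haveI := hpq.ennrealOfReal
    hFm.integrable_mul hGm
  refine ⟨(integrable_norm_iff hf).1 (hint.congr hFG), ?_⟩
  calc ∫ x, |f x| ∂μ = ∫ x, F x * G x ∂μ := integral_congr_ae hFG.symm
    _ ≤ (∫ x, F x ^ p ∂μ) ^ (1 / p) * (∫ x, G x ^ q ∂μ) ^ (1 / q) :=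
      integral_mul_le_Lp_mul_Lq_of_nonneg hpq hF0 hG0 hFm hGm
    _ = _ := by rw [integral_congr_ae hFp, integral_congr_ae hGq]

end WeightedHolder

theorem abs_le_setIntegral_abs_of_tendsto_nhdsLT {v g : ℝ → ℝ} {a b : ℝ} (hab : a < b)
    (hftc : ∀ c ∈ Ioo a b, v c - v a = ∫ s in a..c, g s) (hg : IntegrableOn g (Ioo a b))
    (hv : Tendsto v (𝓝[<] b) (𝓝 0)) :
    |v a| ≤ ∫ s in Ioo a b, |g s| := by
  have hbound : ∀ c ∈ Ioo a b, |v a| ≤ |v c| + ∫ s in Ioo a b, |g s| := by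
    intro c hc
    have hac : |∫ s in a..c, g s| ≤ ∫ s in Ioo a b, |g s| :=
      calc |∫ s in a..c, g s| ≤ ∫ s in a..c, |g s| :=
            intervalIntegral.abs_integral_le_integral_abs hc.1.le
        _ = ∫ s in Ioo a c, |g s| := by
            rw [intervalIntegral.integral_of_le hc.1.le, integral_Ioc_eq_integral_Ioo]
        _ ≤ ∫ s in Ioo a b, |g s| :=
            setIntegral_mono_set hg.abs (ae_of_all _ fun _ => abs_nonneg _)
              (Ioo_subset_Ioo_right hc.2.le).eventuallyLE
    have := abs_sub (v c) (v c - v a)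
    rw [sub_sub_cancel, hftc c hc] at this
    linarith
  have hlim : Tendsto (fun c => |v c| + ∫ s in Ioo a b, |g s|) (𝓝[<] b)
      (𝓝 (0 + ∫ s in Ioo a b, |g s|)) := by
    simpa using hv.abs.add_const (∫ s in Ioo a b, |g s|)
  rw [← zero_add (∫ s in Ioo a b, |g s|)]
  refine ge_of_tendsto hlim ?_
  filter_upwards [Ioo_mem_nhdsLT hab] with c hc
  exact hbound c hc

theorem integrableOn_Ioo_rpow {a b γ : ℝ} (ha : 0 < a) :
    IntegrableOn (fun x => x ^ γ) (Ioo a b) :=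
  (ContinuousOn.integrableOn_Icc (continuousOn_id.rpow_const fun _ hx =>
    Or.inl (ha.trans_le hx.1).ne')).mono_set Ioo_subset_Icc_self

theorem setIntegral_Ioo_rpow {a b γ : ℝ} (ha : 0 < a) (hab : a ≤ b) (hγ : γ ≠ -1) :
    ∫ x in Ioo a b, x ^ γ = (b ^ (γ + 1) - a ^ (γ + 1)) / (γ + 1) := by
  have h0 : (0 : ℝ) ∉ uIcc a b := by
    rw [uIcc_of_le hab]
    exact fun h => ha.not_ge h.1
  rw [← integral_Ioc_eq_integral_Ioo, ← intervalIntegral.integral_of_le hab,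
    integral_rpow (Or.inr ⟨hγ, h0⟩)]

theorem integrableOn_and_setIntegral_Ioo_rpow_conj_weight {N k r : ℝ} (hk : 0 < k)
    (hNk : 2 * k < N) (hr : r ∈ Ioc 0 1) :
    IntegrableOn (fun s => (s ^ (N - k)) ^ (1 - (k + 1) / k)) (Ioo r 1) ∧
      ∫ s in Ioo r 1, (s ^ (N - k)) ^ (1 - (k + 1) / k) =
        k / (N - 2 * k) * (r ^ (-((N - 2 * k) / k)) - 1) := by
  have hweight : ∀ s ∈ Ioo r 1, (s ^ (N - k)) ^ (1 - (k + 1) / k) = s ^ (-((N - k) / k)) := by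
    intro s hs
    rw [← rpow_mul (hr.1.trans hs.1).le]
    congr 1
    field_simp
    ring
  have hγ : -((N - k) / k) ≠ -1 := by
    rw [Ne, neg_inj, div_eq_one_iff_eq hk.ne']
    linarith
  refine ⟨(integrableOn_Ioo_rpow hr.1).congr_fun (fun s hs => (hweight s hs).symm)
    measurableSet_Ioo, ?_⟩
  rw [setIntegral_congr_fun measurableSet_Ioo hweight, setIntegral_Ioo_rpow hr.1 hr.2 hγ,
    one_rpow, show -((N - k) / k) + 1 = -((N - 2 * k) / k) by field_simp; ring]
  have : N - 2 * k ≠ 0 := by linarith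
  field_simp
  ring

theorem div_mul_rpow_neg_sub_one_nonneg {N k r : ℝ} (hk : 0 < k) (hNk : 2 * k < N)
    (hr : r ∈ Ioc 0 1) : 0 ≤ k / (N - 2 * k) * (r ^ (-((N - 2 * k) / k)) - 1) := by
  have hr_pow : 1 ≤ r ^ (-((N - 2 * k) / k)) :=
    one_le_rpow_of_pos_of_le_one_of_nonpos hr.1 hr.2
      (neg_nonpos.2 (div_nonneg (by linarith) hk.le))
  exact mul_nonneg (div_nonneg hk.le (by linarith)) (by linarith)

theorem omegaNk_pos {N k : ℕ} (hN : 0 < N) (hkN : k ≤ N) : 0 < omegaNk N k := by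
  have hΓ : 0 < Gamma ((N : ℝ) / 2) := Gamma_pos_of_pos (by positivity)
  have hchoose : 0 < (N.choose k : ℝ) := by exact_mod_cast Nat.choose_pos hkN
  unfold omegaNk omegaSphere
  positivity

theorem rpow_conj_mul_rpow_cancel_scale {k ω c X I : ℝ} (hk : 0 < k) (hω : 0 < ω)
    (hcX : 0 ≤ c * X) (hI : 0 ≤ I) :
    (c * ω ^ (-1 / k) * X) ^ (k / (k + 1)) * (ω * I) ^ (1 / (k + 1)) =
      (c * X) ^ (k / (k + 1)) * I ^ (1 / (k + 1)) := by
  have hω_cancel : (ω ^ (-1 / k)) ^ (k / (k + 1)) * ω ^ (1 / (k + 1)) = 1 := by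
    rw [← rpow_mul hω.le, ← rpow_add hω, show -1 / k * (k / (k + 1)) + 1 / (k + 1) = 0 by
      field_simp; ring, rpow_zero]
  rw [show c * ω ^ (-1 / k) * X = c * X * ω ^ (-1 / k) by ring, mul_rpow hcX (by positivity),
    mul_rpow hω.le hI]
  linear_combination (c * X) ^ (k / (k + 1)) * I ^ (1 / (k + 1)) * hω_cancel

theorem MemX1.abs_le_rpow_mul_weightedIntegral_rpow {N k : ℕ} {v : ℝ → ℝ} (hv : MemX1 N k v)
    (hk : 1 ≤ k) (hN : 2 * k < N) {r : ℝ} (hr : r ∈ Ioc 0 1) :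
    |v r| ≤
      ((k : ℝ) / ((N : ℝ) - 2 * k) * (r ^ (-(((N : ℝ) - 2 * k) / k)) - 1)) ^
          ((k : ℝ) / (k + 1)) *
        (∫ s in Ioo 0 1, s ^ ((N : ℝ) - k) * |deriv v s| ^ ((k : ℝ) + 1)) ^
          (1 / ((k : ℝ) + 1)) := by
  obtain ⟨hr0, hr1⟩ := hr
  have hk0 : (0 : ℝ) < k := by exact_mod_cast hk
  have hNk : 2 * (k : ℝ) < N := by exact_mod_cast hN
  have hpq : ((k : ℝ) + 1).HolderConjugate (((k : ℝ) + 1) / k) := by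
    rw [holderConjugate_iff, inv_div]
    exact ⟨by linarith, by field_simp; ring⟩
  obtain ⟨hweight_int, hweight⟩ :=
    integrableOn_and_setIntegral_Ioo_rpow_conj_weight hk0 hNk ⟨hr0, hr1⟩
  obtain ⟨hint, hholder⟩ :=
    integrable_and_integral_abs_le_weighted (μ := volume.restrict (Ioo r 1)) hpq
      (measurable_deriv v).aestronglyMeasurable (by fun_prop)
      ((ae_restrict_iff' measurableSet_Ioo).2 (ae_of_all _ fun s hs => by
        have := hr0.trans hs.1; positivity))
      (hv.int_deriv.mono_set (Ioo_subset_Ioo_left hr0.le)) hweight_int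
  have habs_le : |v r| ≤ ∫ s in Ioo r 1, |deriv v s| := by
    rcases hr1.lt_or_eq with hr1 | rfl
    · exact abs_le_setIntegral_abs_of_tendsto_nhdsLT hr1
        (fun c hc => (hv.ftc r ⟨hr0, hr1⟩ c ⟨hr0.trans hc.1, hc.2⟩).2) hint hv.lim_one
    · simp [hv.val_one]
  have hintegrand :
      ∀ s ∈ Ioo (0 : ℝ) 1, 0 ≤ s ^ ((N : ℝ) - k) * |deriv v s| ^ ((k : ℝ) + 1) :=
    fun s hs => by have := hs.1; positivity
  have htail_le : ∫ s in Ioo r 1, s ^ ((N : ℝ) - k) * |deriv v s| ^ ((k : ℝ) + 1) ≤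
      ∫ s in Ioo 0 1, s ^ ((N : ℝ) - k) * |deriv v s| ^ ((k : ℝ) + 1) :=
    setIntegral_mono_set hv.int_deriv (ae_restrict_of_forall_mem measurableSet_Ioo hintegrand)
      (Ioo_subset_Ioo_left hr0.le).eventuallyLE
  have htail_nonneg : 0 ≤ ∫ s in Ioo r 1, s ^ ((N : ℝ) - k) * |deriv v s| ^ ((k : ℝ) + 1) :=
    setIntegral_nonneg measurableSet_Ioo fun s hs => hintegrand s ⟨hr0.trans hs.1, hs.2⟩
  rw [hweight, one_div_div, mul_comm] at hholder
  refine habs_le.trans (hholder.trans ?_)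
  gcongr
  exact rpow_nonneg (div_mul_rpow_neg_sub_one_nonneg hk0 hNk ⟨hr0, hr1⟩) _

/-- **Radial-type lemma.** For every `v ∈ X_1` and `0 < r ≤ 1`,
`|v(r)| ≤ [c̄ (r^{-(N-2k)/k} - 1)]^{k/(k+1)} ‖v‖_{X_1}`,
where `c̄ = (k/(N-2k)) ω_{N,k}^{-1/k}`. -/
theorem radial_lemma (N k : ℕ) (hk : 1 ≤ k) (hN : 2 * k < N) (v : ℝ → ℝ)
    (hv : MemX1 N k v) (r : ℝ) (hr : r ∈ Set.Ioc (0:ℝ) 1) :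
    |v r| ≤
      (((k : ℝ) / ((N : ℝ) - 2 * (k : ℝ)) * omegaNk N k ^ (-(1 : ℝ) / (k : ℝ))) *
          (r ^ (-(((N : ℝ) - 2 * (k : ℝ)) / (k : ℝ))) - 1)) ^ ((k : ℝ) / ((k : ℝ) + 1)) *
        X1norm N k v := by
  have hk0 : (0 : ℝ) < k := by exact_mod_cast hk
  have hNk : 2 * (k : ℝ) < N := by exact_mod_cast hN
  have hI : 0 ≤ ∫ s in Ioo 0 1, s ^ ((N : ℝ) - k) * |deriv v s| ^ ((k : ℝ) + 1) :=
    setIntegral_nonneg measurableSet_Ioo fun s hs => by have := hs.1; positivity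
  rw [X1norm, rpow_conj_mul_rpow_cancel_scale hk0 (omegaNk_pos (by omega) (by omega))
    (div_mul_rpow_neg_sub_one_nonneg hk0 hNk hr) hI]
  exact hv.abs_le_rpow_mul_weightedIntegral_rpow hk hN hr
end

section
/- (Instanton integral estimates away from the concentration scale.) Let β ≥ 0 be a real number and γ ∈ (0,1). Then, as ε → 0⁺: if β < N/k, ∫_{ε^γ}^1 r^{N+β−1}(v*_ε(r))^{k*} dr = O(ε^{(1−γ)N/k + βγ}); if β = N/k, ∫_{ε^γ}^1 r^{N+β−1}(v*_ε(r))^{k*} dr = O(ε^{N/k}(−log ε)); and if β > N/k, ∫_{ε^γ}^1 r^{N+β−1}(v*_ε(r))^{k*} dr = O(ε^{N/k}). -/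
open MeasureTheory Real Set Filter Asymptotics

/-! Since `ε² + r² ≥ r²`, the instanton satisfies `(v*_ε r)^{k*} ≤ ĉ^{k*} ε^{N/k} r^{-N-N/k}`, so the
integral is at most `ĉ^{k*} ε^{N/k} ∫_{ε^γ}^1 r^{β-N/k-1} dr`. This power integral is of order
`(ε^γ)^{β-N/k}`, `γ (-log ε)` or `1` according to the sign of `β - N/k`. -/

open Topology

lemma integral_Ioo_rpow_sub_one {a s : ℝ} (ha : 0 < a) (ha1 : a ≤ 1) (hs : s ≠ 0) :
    ∫ r in Ioo a 1, r ^ (s - 1) = (1 - a ^ s) / s := by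
  rw [← integral_Ioc_eq_integral_Ioo, ← intervalIntegral.integral_of_le ha1,
    integral_rpow (Or.inr ⟨by contrapose! hs; linarith, notMem_uIcc_of_lt ha one_pos⟩),
    sub_add_cancel, one_rpow]

lemma integral_Ioo_rpow_neg_one {a : ℝ} (ha : 0 < a) (ha1 : a ≤ 1) :
    ∫ r in Ioo a 1, r ^ (-1 : ℝ) = -log a := by
  simp_rw [rpow_neg_one]
  rw [← integral_Ioc_eq_integral_Ioo, ← intervalIntegral.integral_of_le ha1,
    integral_inv (notMem_uIcc_of_lt ha one_pos), one_div, log_inv]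

lemma integral_Ioo_rpow_nonneg {a : ℝ} (ha : 0 ≤ a) (s : ℝ) : 0 ≤ ∫ r in Ioo a 1, r ^ s :=
  setIntegral_nonneg measurableSet_Ioo fun _ hr => rpow_nonneg (ha.trans hr.1.le) _

lemma isBigO_integral_Ioo_rpow_sub_one_of_neg {s : ℝ} (hs : s < 0) :
    (fun a : ℝ => ∫ r in Ioo a 1, r ^ (s - 1)) =O[𝓝[>] 0] fun a => a ^ s := by
  refine IsBigO.of_bound (-s)⁻¹ ?_
  filter_upwards [Ioo_mem_nhdsGT one_pos] with a ⟨ha, ha1⟩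
  rw [norm_of_nonneg (integral_Ioo_rpow_nonneg ha.le _), norm_of_nonneg (rpow_nonneg ha.le _),
    integral_Ioo_rpow_sub_one ha ha1.le hs.ne, div_le_iff_of_neg hs]
  have : (-s)⁻¹ * a ^ s * s = -a ^ s := by field_simp [hs.ne]
  linarith

lemma isBigO_integral_Ioo_rpow_sub_one_of_pos {s : ℝ} (hs : 0 < s) :
    (fun a : ℝ => ∫ r in Ioo a 1, r ^ (s - 1)) =O[𝓝[>] 0] fun _ => (1 : ℝ) := by
  refine IsBigO.of_bound s⁻¹ ?_
  filter_upwards [Ioo_mem_nhdsGT one_pos] with a ⟨ha, ha1⟩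
  rw [norm_of_nonneg (integral_Ioo_rpow_nonneg ha.le _), norm_one, mul_one, ← one_div,
    integral_Ioo_rpow_sub_one ha ha1.le hs.ne']
  gcongr
  linarith [rpow_nonneg ha.le s]

lemma tendsto_rpow_nhdsGT_zero {γ : ℝ} (hγ : 0 < γ) :
    Tendsto (fun ε : ℝ => ε ^ γ) (𝓝[>] 0) (𝓝[>] 0) := by
  refine tendsto_nhdsWithin_iff.2 ⟨?_, eventually_nhdsWithin_of_forall fun ε hε => rpow_pos_of_pos hε γ⟩
  have := (continuousAt_rpow_const 0 γ (Or.inr hγ.le)).tendsto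
  rw [zero_rpow hγ.ne'] at this
  exact this.mono_left nhdsWithin_le_nhds

section Instanton

variable {N k : ℕ}

lemma cast_sub_two_mul_pos (hN : 2 * k < N) : (0 : ℝ) < N - 2 * k := by
  have := (Nat.cast_lt (α := ℝ)).2 hN
  push_cast at this
  linarith

lemma chat_nonneg (hN : 2 * k < N) : 0 ≤ chat N k :=
  rpow_nonneg (by have := cast_sub_two_mul_pos hN; positivity) _

lemma vstar_nonneg (hN : 2 * k < N) {ε : ℝ} (hε : 0 ≤ ε) (r : ℝ) : 0 ≤ vstar N k ε r :=
  mul_nonneg (chat_nonneg hN) (rpow_nonneg (by positivity) _)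

lemma continuous_vstar {ε : ℝ} (hε : 0 < ε) : Continuous (vstar N k ε) := by
  refine continuous_const.mul (Continuous.rpow_const ?_ fun r => Or.inl ?_)
  · exact continuous_const.div (by fun_prop) fun r => by positivity
  · positivity

lemma vstar_rpow_kstar (hk : 0 < k) (hN : 2 * k < N) {ε : ℝ} (hε : 0 ≤ ε) (r : ℝ) :
    vstar N k ε r ^ kstar N k = chat N k ^ kstar N k *
      (ε ^ ((2 : ℝ) / (k + 1)) / (ε ^ 2 + r ^ 2)) ^ ((N : ℝ) * (k + 1) / (2 * k)) := by
  have hk' : (k : ℝ) ≠ 0 := by positivity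
  have hN' := (cast_sub_two_mul_pos hN).ne'
  have hbase : 0 ≤ ε ^ ((2 : ℝ) / (k + 1)) / (ε ^ 2 + r ^ 2) := by positivity
  rw [vstar, mul_rpow (chat_nonneg hN) (rpow_nonneg hbase _), ← rpow_mul hbase, kstar]
  congr 2
  field_simp

lemma rpow_mul_vstar_rpow_kstar_le (hk : 0 < k) (hN : 2 * k < N) (β : ℝ) {ε r : ℝ}
    (hε : 0 < ε) (hr : 0 < r) :
    r ^ ((N : ℝ) + β - 1) * vstar N k ε r ^ kstar N k ≤
      chat N k ^ kstar N k * ε ^ ((N : ℝ) / k) * r ^ (β - N / k - 1) := by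
  have hk' : (k : ℝ) ≠ 0 := by positivity
  set p : ℝ := (N : ℝ) * (k + 1) / (2 * k)
  have hdrop : (ε ^ ((2 : ℝ) / (k + 1)) / (ε ^ 2 + r ^ 2)) ^ p ≤
      (ε ^ ((2 : ℝ) / (k + 1)) / r ^ 2) ^ p := by
    gcongr
    linarith [sq_nonneg ε]
  have hsplit : (ε ^ ((2 : ℝ) / (k + 1)) / r ^ 2) ^ p = ε ^ ((N : ℝ) / k) * r ^ (-(2 * p)) := by
    rw [div_rpow (by positivity) (by positivity), ← rpow_mul hε.le, ← rpow_natCast,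
      ← rpow_mul hr.le, rpow_neg hr.le, div_eq_mul_inv]
    congr 2
    simp only [p]
    field_simp
  have hexp : (N : ℝ) + β - 1 + -(2 * p) = β - N / k - 1 := by
    simp only [p]
    field_simp
    ring
  calc r ^ ((N : ℝ) + β - 1) * vstar N k ε r ^ kstar N k
      ≤ r ^ ((N : ℝ) + β - 1) * (chat N k ^ kstar N k * (ε ^ ((2 : ℝ) / (k + 1)) / r ^ 2) ^ p) := by
        rw [vstar_rpow_kstar hk hN hε.le]
        gcongr
        exact rpow_nonneg (chat_nonneg hN) _
    _ = chat N k ^ kstar N k * ε ^ ((N : ℝ) / k) * r ^ (β - N / k - 1) := by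
        rw [hsplit, ← hexp, rpow_add hr]
        ring

lemma integral_rpow_mul_vstar_rpow_kstar_le (hk : 0 < k) (hN : 2 * k < N) (β : ℝ) {ε a b : ℝ}
    (hε : 0 < ε) (ha : 0 < a) :
    ∫ r in Ioo a b, r ^ ((N : ℝ) + β - 1) * vstar N k ε r ^ kstar N k ≤
      chat N k ^ kstar N k * ε ^ ((N : ℝ) / k) * ∫ r in Ioo a b, r ^ (β - N / k - 1) := by
  have hkstar : 0 ≤ kstar N k := div_nonneg (by positivity) (cast_sub_two_mul_pos hN).le
  have hpos : ∀ r ∈ Icc a b, r ≠ 0 := fun r hr => (ha.trans_le hr.1).ne'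
  have hf : IntegrableOn (fun r => r ^ ((N : ℝ) + β - 1) * vstar N k ε r ^ kstar N k) (Icc a b) :=
    ((continuousOn_id.rpow_const fun r hr => Or.inl (hpos r hr)).mul
      ((continuous_vstar hε).rpow_const fun _ => Or.inr hkstar).continuousOn).integrableOn_Icc
  have hg : IntegrableOn (fun r => r ^ (β - N / k - 1)) (Icc a b) :=
    (continuousOn_id.rpow_const fun r hr => Or.inl (hpos r hr)).integrableOn_Icc
  rw [← integral_const_mul]
  exact setIntegral_mono_on (hf.mono_set Ioo_subset_Icc_self)
    ((hg.mono_set Ioo_subset_Icc_self).const_mul _) measurableSet_Ioo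
    fun r hr => rpow_mul_vstar_rpow_kstar_le hk hN β hε (ha.trans hr.1)

lemma isBigO_integral_rpow_mul_vstar_rpow_kstar (hk : 0 < k) (hN : 2 * k < N) (β γ : ℝ) :
    (fun ε : ℝ => ∫ r in Ioo (ε ^ γ) 1, r ^ ((N : ℝ) + β - 1) * vstar N k ε r ^ kstar N k)
      =O[𝓝[>] 0] fun ε => ε ^ ((N : ℝ) / k) * ∫ r in Ioo (ε ^ γ) 1, r ^ (β - N / k - 1) := by
  refine IsBigO.of_bound (chat N k ^ kstar N k) ?_
  filter_upwards [self_mem_nhdsWithin] with ε (hε : 0 < ε)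
  have ha : 0 < ε ^ γ := rpow_pos_of_pos hε γ
  rw [norm_of_nonneg, norm_of_nonneg, ← mul_assoc]
  · exact integral_rpow_mul_vstar_rpow_kstar_le hk hN β hε ha
  · exact mul_nonneg (rpow_nonneg hε.le _) (integral_Ioo_rpow_nonneg ha.le _)
  · exact setIntegral_nonneg measurableSet_Ioo fun r hr =>
      mul_nonneg (rpow_nonneg (ha.trans hr.1).le _) (rpow_nonneg (vstar_nonneg hN hε.le r) _)

end Instanton

theorem instanton_away_general (N k : ℕ) (hk : 1 ≤ k) (hN : 2 * k < N)
    (β γ : ℝ) (hγ : γ ∈ Set.Ioo (0:ℝ) 1) :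
    (β < (N : ℝ) / (k : ℝ) →
      (fun ε : ℝ => ∫ r in Set.Ioo (ε ^ γ) 1,
          r ^ ((N : ℝ) + β - 1) * vstar N k ε r ^ kstar N k)
        =O[nhdsWithin 0 (Set.Ioi 0)]
          fun ε : ℝ => ε ^ ((1 - γ) * (N : ℝ) / (k : ℝ) + β * γ)) ∧
    (β = (N : ℝ) / (k : ℝ) →
      (fun ε : ℝ => ∫ r in Set.Ioo (ε ^ γ) 1,
          r ^ ((N : ℝ) + β - 1) * vstar N k ε r ^ kstar N k)
        =O[nhdsWithin 0 (Set.Ioi 0)]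
          fun ε : ℝ => ε ^ ((N : ℝ) / (k : ℝ)) * (-Real.log ε)) ∧
    ((N : ℝ) / (k : ℝ) < β →
      (fun ε : ℝ => ∫ r in Set.Ioo (ε ^ γ) 1,
          r ^ ((N : ℝ) + β - 1) * vstar N k ε r ^ kstar N k)
        =O[nhdsWithin 0 (Set.Ioi 0)]
          fun ε : ℝ => ε ^ ((N : ℝ) / (k : ℝ))) := by
  have key := isBigO_integral_rpow_mul_vstar_rpow_kstar hk hN β γ
  have hγ₀ := tendsto_rpow_nhdsGT_zero hγ.1
  refine ⟨fun hlt => ?_, fun heq => ?_, fun hgt => ?_⟩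
  · have hI := (isBigO_integral_Ioo_rpow_sub_one_of_neg (sub_neg.2 hlt)).comp_tendsto hγ₀
    refine (key.trans ((isBigO_refl _ _).mul hI)).congr' EventuallyEq.rfl ?_
    filter_upwards [self_mem_nhdsWithin] with ε (hε : 0 < ε)
    rw [Function.comp_apply, ← rpow_mul hε.le, ← rpow_add hε]
    congr 1
    field_simp
    ring
  · subst heq
    have hI : (fun ε : ℝ => ∫ r in Ioo (ε ^ γ) 1, r ^ ((N : ℝ) / k - N / k - 1))
        =ᶠ[𝓝[>] 0] fun ε => γ * -log ε := by
      filter_upwards [Ioo_mem_nhdsGT one_pos] with ε ⟨hε, hε1⟩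
      rw [sub_self, zero_sub, integral_Ioo_rpow_neg_one (rpow_pos_of_pos hε γ)
        (rpow_le_one hε.le hε1.le hγ.1.le), log_rpow hε, neg_mul_eq_mul_neg]
    exact key.trans ((isBigO_refl _ _).mul (hI.trans_isBigO (isBigO_const_mul_self γ _ _)))
  · have hI := (isBigO_integral_Ioo_rpow_sub_one_of_pos (sub_pos.2 hgt)).comp_tendsto hγ₀
    simpa using key.trans ((isBigO_refl _ _).mul hI)

/-- **Instanton integral estimates away from the concentration scale.**
As `ε → 0⁺`: `∫_{ε^γ}^1 r^{N+β-1} (v*_ε)^{k*} dr` is `O(ε^{(1-γ)N/k + βγ})` if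
`β < N/k`, `O(ε^{N/k} (-log ε))` if `β = N/k`, and `O(ε^{N/k})` if `β > N/k`. -/
theorem instanton_away (N k : ℕ) (hk : 1 ≤ k) (hN : 2 * k < N)
    (β γ : ℝ) (hβ : 0 ≤ β) (hγ : γ ∈ Set.Ioo (0:ℝ) 1) :
    (β < (N : ℝ) / (k : ℝ) →
      (fun ε : ℝ => ∫ r in Set.Ioo (ε ^ γ) 1,
          r ^ ((N : ℝ) + β - 1) * vstar N k ε r ^ kstar N k)
        =O[nhdsWithin 0 (Set.Ioi 0)]
          fun ε : ℝ => ε ^ ((1 - γ) * (N : ℝ) / (k : ℝ) + β * γ)) ∧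
    (β = (N : ℝ) / (k : ℝ) →
      (fun ε : ℝ => ∫ r in Set.Ioo (ε ^ γ) 1,
          r ^ ((N : ℝ) + β - 1) * vstar N k ε r ^ kstar N k)
        =O[nhdsWithin 0 (Set.Ioi 0)]
          fun ε : ℝ => ε ^ ((N : ℝ) / (k : ℝ)) * (-Real.log ε)) ∧
    ((N : ℝ) / (k : ℝ) < β →
      (fun ε : ℝ => ∫ r in Set.Ioo (ε ^ γ) 1,
          r ^ ((N : ℝ) + β - 1) * vstar N k ε r ^ kstar N k)
        =O[nhdsWithin 0 (Set.Ioi 0)]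
          fun ε : ℝ => ε ^ ((N : ℝ) / (k : ℝ))) :=
  instanton_away_general N k hk hN β γ hγ
end
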